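/- Let n be a positive integer and c a real number with c > 2n - 1. Then the integral over [1,∞)^n of the function (a_1,...,a_n) ↦ ∏_{1 ≤ i < j ≤ n} (a_i/a_j + a_j/a_i) · ∏_{i=1}^{n} a_i^{-c} (with respect to Lebesgue measure da_1 ⋯ da_n) is finite. -/

import Mathlib

/-!
On `[1, ∞)ⁿ` every factor satisfies `aᵢ/aⱼ + aⱼ/aᵢ ≤ 2 aᵢ aⱼ ≤ (2aᵢ)(2aⱼ)`, and a product
`∏_{i<j} gᵢ gⱼ` equals `∏ᵢ gᵢ^(n-1)` because each index occurs in exactly `n - 1` pairs. So the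
integrand is dominated by `∏ᵢ (2aᵢ)^(n-1) aᵢ^(-c)`, a product of functions of one variable, each
integrable on `[1, ∞)` because `n - 1 - c < -1`, which follows from `c > 2n - 1 ≥ n`.
-/

open MeasureTheory Finset

theorem Fin.prod_filter_lt_mul_eq_prod_pow {M : Type*} [CommMonoid M] {n : ℕ} (g : Fin n → M) :
    ∏ i, ∏ j ∈ univ.filter (fun j => i < j), g i * g j = ∏ i, g i ^ (n - 1) := by
  have hswap : ∏ i, ∏ j ∈ univ.filter (fun j => i < j), g j
      = ∏ j, ∏ _i ∈ univ.filter (fun i => i < j), g j :=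
    prod_comm' (by simp)
  simp only [prod_mul_distrib]
  rw [hswap, ← prod_mul_distrib]
  refine prod_congr rfl fun i _ => ?_
  rw [Finset.prod_const, Finset.prod_const, ← pow_add, filter_lt_eq_Ioi, filter_gt_eq_Iio,
    Fin.card_Ioi, Fin.card_Iio]
  congr 1
  omega

theorem div_add_div_le_two_mul_mul {x y : ℝ} (hx : 1 ≤ x) (hy : 1 ≤ y) :
    x / y + y / x ≤ 2 * (x * y) := by
  have hxy : x / y ≤ x * y :=
    (div_le_self (by linarith) hy).trans (le_mul_of_one_le_right (by linarith) hy)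
  have hyx : y / x ≤ x * y :=
    (div_le_self (by linarith) hx).trans (le_mul_of_one_le_left (by linarith) hx)
  linarith

theorem MeasureTheory.IntegrableOn.fintype_prod {ι E : Type*} [Fintype ι] [MeasurableSpace E]
    {μ : Measure E} [SigmaFinite μ] {f : ι → E → ℝ} {s : ι → Set E}
    (hf : ∀ i, IntegrableOn (f i) (s i) μ) :
    IntegrableOn (fun x : ι → E => ∏ i, f i (x i)) (Set.univ.pi s) (Measure.pi fun _ => μ) := by
  rw [IntegrableOn, Measure.restrict_pi_pi]
  exact Integrable.fintype_prod hf

theorem integrableOn_Ici_one_rpow {e : ℝ} (he : e < -1) :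
    IntegrableOn (fun t : ℝ => t ^ e) (Set.Ici 1) :=
  (integrableOn_Ici_iff_integrableOn_Ioi).mpr (integrableOn_Ioi_rpow_of_lt he one_pos)

theorem integrableOn_Ici_one_mul_pow_mul_rpow_neg (b : ℝ) {k : ℕ} {c : ℝ} (hc : k + 1 < c) :
    IntegrableOn (fun t : ℝ => (b * t) ^ k * t ^ (-c)) (Set.Ici 1) := by
  refine IntegrableOn.congr_fun
    ((integrableOn_Ici_one_rpow (e := k - c) (by linarith)).const_mul (b ^ k))
    (fun t ht => ?_) measurableSet_Ici
  have ht : 0 < t := one_pos.trans_le ht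
  rw [sub_eq_add_neg, Real.rpow_add ht, Real.rpow_natCast, mul_pow, mul_assoc]

theorem prod_filter_lt_div_add_div_le {n : ℕ} {a : Fin n → ℝ} (ha : ∀ i, 1 ≤ a i) :
    ∏ i, ∏ j ∈ univ.filter (fun j => i < j), (a i / a j + a j / a i)
      ≤ ∏ i, (2 * a i) ^ (n - 1) := by
  have hpos : ∀ i, 0 < a i := fun i => one_pos.trans_le (ha i)
  have hfactor : ∀ i j, 0 ≤ a i / a j + a j / a i := fun i j => by
    have := hpos i; have := hpos j; positivity
  rw [← Fin.prod_filter_lt_mul_eq_prod_pow]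
  refine prod_le_prod (fun i _ => prod_nonneg fun j _ => hfactor i j) fun i _ =>
    prod_le_prod (fun j _ => hfactor i j) fun j _ => ?_
  exact (div_add_div_le_two_mul_mul (ha i) (ha j)).trans
    (by nlinarith [mul_pos (hpos i) (hpos j)])

theorem stable_range_convergence (n : ℕ) (hn : 0 < n) (c : ℝ) (hc : 2 * (n : ℝ) - 1 < c) :
    IntegrableOn
      (fun a : Fin n → ℝ =>
        (∏ i, ∏ j ∈ Finset.univ.filter (fun j => i < j), (a i / a j + a j / a i)) *
          ∏ i, a i ^ (-c))
      (Set.univ.pi fun _ => Set.Ici (1 : ℝ)) volume := by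
  have hnc : ((n - 1 : ℕ) : ℝ) + 1 < c := by
    rw [Nat.cast_sub hn, Nat.cast_one]
    linarith [(Nat.one_le_cast.mpr hn : (1 : ℝ) ≤ n)]
  have hdom : IntegrableOn (fun a : Fin n → ℝ => ∏ i, (2 * a i) ^ (n - 1) * a i ^ (-c))
      (Set.univ.pi fun _ => Set.Ici 1) volume :=
    IntegrableOn.fintype_prod fun _ => integrableOn_Ici_one_mul_pow_mul_rpow_neg 2 hnc
  refine hdom.mono' (by fun_prop) ?_
  refine ae_restrict_of_forall_mem (MeasurableSet.univ_pi fun _ => measurableSet_Ici) fun a ha => ?_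
  have ha1 : ∀ i, 1 ≤ a i := fun i => ha i (Set.mem_univ i)
  have ha0 : ∀ i, 0 ≤ a i := fun i => zero_le_one.trans (ha1 i)
  have hR : 0 ≤ ∏ i, a i ^ (-c) := prod_nonneg fun i _ => Real.rpow_nonneg (ha0 i) _
  have hP : 0 ≤ ∏ i, ∏ j ∈ univ.filter (fun j => i < j), (a i / a j + a j / a i) :=
    prod_nonneg fun i _ => prod_nonneg fun j _ =>
      add_nonneg (div_nonneg (ha0 i) (ha0 j)) (div_nonneg (ha0 j) (ha0 i))
  rw [Real.norm_of_nonneg (mul_nonneg hP hR), prod_mul_distrib]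
  exact mul_le_mul_of_nonneg_right (prod_filter_lt_div_add_div_le ha1) hR
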